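/- arXiv:2505.05105 — 7 statements merged into one kernel-verified Lean document; each statement's English description precedes it below -/
import Mathlib

section
/- Let n ≥ 4 be an even integer, λ ∈ ℝ, θ₁ ∈ (0,1], and r_a ∈ ℝ. Define r^λ_h ∈ ℝ^{n+1} by (r^λ_h)_0 = λθ₁r_a, (r^λ_h)_1 = λ(1−θ₁)r_a and (r^λ_h)_k = 0 for 2 ≤ k ≤ n, and define r^λ_{2h} ∈ ℝ^{n/2+1} by (r^λ_{2h})_0 = (λ/2)(1+θ₁)r_a, (r^λ_{2h})_1 = (λ/2)(1−θ₁)r_a and (r^λ_{2h})_k = 0 for 2 ≤ k ≤ n/2. Then 𝓘·r^λ_h = r^λ_{2h}; note that (λ/2)(1+θ₁) = λθ₁' and (λ/2)(1−θ₁) = λ(1−θ₁') where θ₁' = (1+θ₁)/2 is the relative cut length of the coarse boundary cell. -/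
/-- The full-weighting restriction matrix `𝓘 ∈ ℝ^{(n/2+1)×(n+1)}`:
`𝓘_{i,2i} = 1`, `𝓘_{i,2i±1} = 1/2`, all other entries `0`. -/
noncomputable def restrict (n : ℕ) : Matrix (Fin (n / 2 + 1)) (Fin (n + 1)) ℝ := fun i j =>
  if (j : ℕ) = 2 * (i : ℕ) then 1
  else if (j : ℕ) + 1 = 2 * (i : ℕ) ∨ (j : ℕ) = 2 * (i : ℕ) + 1 then 1 / 2
  else 0

/-! The first fine node feeds only the first coarse node, with weight `1`; the second one is
shared with weight `1/2` by the first two coarse nodes. Hence restriction maps a fine vector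
supported on the first two nodes to `(v₀ + v₁/2, v₁/2, 0, …, 0)`. -/

section

variable {n : ℕ}

lemma restrict_apply_zero (i : Fin (n / 2 + 1)) : restrict n i 0 = if (i : ℕ) = 0 then 1 else 0 := by
  rcases i with ⟨_ | i, hi⟩
  · simp [restrict]
  · simp [restrict]; omega

lemma restrict_apply_one (hn : 1 ≤ n) (i : Fin (n / 2 + 1)) :
    restrict n i ⟨1, by omega⟩ = if (i : ℕ) ≤ 1 then 1 / 2 else 0 := by
  rcases i with ⟨_ | _ | i, hi⟩
  · simp [restrict]
  · simp [restrict]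
  · simp [restrict]; omega

theorem restrict_mulVec_of_forall_two_le_eq_zero (hn : 1 ≤ n) (v : Fin (n + 1) → ℝ)
    (hv : ∀ k : Fin (n + 1), 2 ≤ (k : ℕ) → v k = 0) :
    (restrict n).mulVec v = fun i : Fin (n / 2 + 1) =>
      if (i : ℕ) = 0 then v 0 + v ⟨1, by omega⟩ / 2
      else if (i : ℕ) = 1 then v ⟨1, by omega⟩ / 2 else 0 := by
  have hv' : ∀ k : Fin (n + 1), k ≠ 0 ∧ k ≠ ⟨1, by omega⟩ → v k = 0 := by
    rintro k ⟨hk0, hk1⟩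
    apply hv
    have h0 := Fin.val_ne_of_ne hk0
    have h1 := Fin.val_ne_of_ne hk1
    simp only [Fin.val_zero] at h0 h1
    omega
  funext i
  rw [Matrix.mulVec, dotProduct, Fintype.sum_eq_add 0 ⟨1, by omega⟩ (Fin.ne_of_val_ne zero_ne_one)
    fun k hk => by rw [hv' k hk, mul_zero],
    restrict_apply_zero, restrict_apply_one hn]
  split_ifs <;> first | (exfalso; omega) | ring

end

theorem restrict_penalty_residual_general (n : ℕ) (hn4 : 4 ≤ n)
    (lam θ₁ : ℝ) (ra : ℝ) :
    (restrict n).mulVec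
        (fun k : Fin (n + 1) =>
          if (k : ℕ) = 0 then lam * θ₁ * ra
          else if (k : ℕ) = 1 then lam * (1 - θ₁) * ra else 0)
      = fun k : Fin (n / 2 + 1) =>
          if (k : ℕ) = 0 then (lam / 2) * (1 + θ₁) * ra
          else if (k : ℕ) = 1 then (lam / 2) * (1 - θ₁) * ra else 0 := by
  rw [restrict_mulVec_of_forall_two_le_eq_zero (by omega) _ fun k hk => by
    simp [show (k : ℕ) ≠ 0 by omega, show (k : ℕ) ≠ 1 by omega]]
  funext i
  simp only [Fin.val_zero, one_ne_zero, if_true, if_false]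
  split_ifs <;> ring

/-- The full-weighting restriction of the fine-grid Nitsche-penalty residual vector
`r^λ_h = λ(θ₁ r_a, (1-θ₁) r_a, 0, …, 0)ᵀ` equals the coarse-grid one
`r^λ_{2h} = (λ/2)((1+θ₁) r_a, (1-θ₁) r_a, 0, …, 0)ᵀ`. -/
theorem restrict_penalty_residual (n : ℕ) (hn : Even n) (hn4 : 4 ≤ n)
    (lam θ₁ : ℝ) (hθ₁ : θ₁ ∈ Set.Ioc (0 : ℝ) 1) (ra : ℝ) :
    (restrict n).mulVec
        (fun k : Fin (n + 1) =>
          if (k : ℕ) = 0 then lam * θ₁ * ra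
          else if (k : ℕ) = 1 then lam * (1 - θ₁) * ra else 0)
      = fun k : Fin (n / 2 + 1) =>
          if (k : ℕ) = 0 then (lam / 2) * (1 + θ₁) * ra
          else if (k : ℕ) = 1 then (lam / 2) * (1 - θ₁) * ra else 0 :=
  restrict_penalty_residual_general n hn4 lam θ₁ ra
end

section
/- Let n ≥ 4 be an even integer, θ₂ ∈ (0,1], and r_b ∈ ℝ. Define r^N_h ∈ ℝ^{n+1} by (r^N_h)_{n−1} = (1−θ₂)r_b, (r^N_h)_n = θ₂r_b and (r^N_h)_k = 0 for 0 ≤ k ≤ n−2, and define r^N_{2h} ∈ ℝ^{n/2+1} by (r^N_{2h})_{n/2−1} = (1/2)(1−θ₂)r_b, (r^N_{2h})_{n/2} = (1/2)(1+θ₂)r_b and (r^N_{2h})_k = 0 for 0 ≤ k ≤ n/2−2. Then 𝓘·r^N_h = r^N_{2h}; note that (1/2)(1−θ₂) = 1−θ₂' and (1/2)(1+θ₂) = θ₂' where θ₂' = (1+θ₂)/2 is the relative cut length of the coarse boundary cell. -/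
theorem restrict_apply_of_eq_two_mul {n k : ℕ} (i : Fin (n / 2 + 1)) (j : Fin (n + 1))
    (hj : (j : ℕ) = 2 * k) : restrict n i j = if (i : ℕ) = k then 1 else 0 := by
  unfold restrict
  split_ifs <;> first | rfl | omega

theorem restrict_apply_of_eq_two_mul_add_one {n k : ℕ} (i : Fin (n / 2 + 1)) (j : Fin (n + 1))
    (hj : (j : ℕ) = 2 * k + 1) :
    restrict n i j = if (i : ℕ) = k ∨ (i : ℕ) = k + 1 then 1 / 2 else 0 := by
  unfold restrict
  split_ifs <;> first | rfl | omega

theorem mulVec_single_add_single {m n R : Type*} [Fintype n] [DecidableEq n]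
    [NonUnitalNonAssocSemiring R] (M : Matrix m n R) (a b : n) (x y : R) :
    M.mulVec (Pi.single a x + Pi.single b y) = fun i => M i a * x + M i b * y := by
  ext i
  simp [Matrix.mulVec_add, Matrix.mulVec_single]

theorem restrict_neumann_residual_general (n : ℕ) (hn : Even n) (hn4 : 4 ≤ n)
    (θ₂ : ℝ) (rb : ℝ) :
    (restrict n).mulVec
        (fun k : Fin (n + 1) =>
          if (k : ℕ) = n - 1 then (1 - θ₂) * rb
          else if (k : ℕ) = n then θ₂ * rb else 0)
      = fun k : Fin (n / 2 + 1) =>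
          if (k : ℕ) = n / 2 - 1 then (1 / 2) * (1 - θ₂) * rb
          else if (k : ℕ) = n / 2 then (1 / 2) * (1 + θ₂) * rb else 0 := by
  obtain ⟨m, rfl⟩ := hn
  let a : Fin (m + m + 1) := ⟨m + m - 1, by omega⟩
  let b : Fin (m + m + 1) := ⟨m + m, by omega⟩
  have residual_eq : (fun k : Fin (m + m + 1) =>
      if (k : ℕ) = m + m - 1 then (1 - θ₂) * rb else if (k : ℕ) = m + m then θ₂ * rb else 0)
        = Pi.single a ((1 - θ₂) * rb) + Pi.single b (θ₂ * rb) := by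
    ext k
    simp only [Pi.add_apply, Pi.single_apply, Fin.ext_iff, a, b]
    split_ifs <;> first | omega | ring
  rw [residual_eq, mulVec_single_add_single]
  ext i
  rw [restrict_apply_of_eq_two_mul_add_one (k := m - 1) i a (by simp only [a]; omega),
    restrict_apply_of_eq_two_mul (k := m) i b (by simp only [b]; omega)]
  split_ifs <;> first | omega | ring

/-- The full-weighting restriction of the fine-grid Neumann residual vector
`r^N_h = (0, …, 0, (1-θ₂) r_b, θ₂ r_b)ᵀ` equals the coarse-grid one
`r^N_{2h} = (0, …, 0, (1/2)(1-θ₂) r_b, (1/2)(1+θ₂) r_b)ᵀ`. -/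
theorem restrict_neumann_residual (n : ℕ) (hn : Even n) (hn4 : 4 ≤ n)
    (θ₂ : ℝ) (hθ₂ : θ₂ ∈ Set.Ioc (0 : ℝ) 1) (rb : ℝ) :
    (restrict n).mulVec
        (fun k : Fin (n + 1) =>
          if (k : ℕ) = n - 1 then (1 - θ₂) * rb
          else if (k : ℕ) = n then θ₂ * rb else 0)
      = fun k : Fin (n / 2 + 1) =>
          if (k : ℕ) = n / 2 - 1 then (1 / 2) * (1 - θ₂) * rb
          else if (k : ℕ) = n / 2 then (1 / 2) * (1 + θ₂) * rb else 0 :=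
  restrict_neumann_residual_general n hn hn4 θ₂ rb
end

section
/- (Equivalence of the splitting and standard restriction strategies.) Let n ≥ 4 be even, h > 0, θ₁, θ₂ ∈ (0,1], λ ∈ ℝ, g_a, g_b ∈ ℝ, F^I ∈ ℝ^{n+1} and û ∈ ℝ^{n+1}. With the matrices A^I, A^B, A^λ, A^{B,N} ∈ ℝ^{(n+1)×(n+1)} and vectors F^B, F^λ, F^N ∈ ℝ^{n+1} defined in the context, set r_a := g_a − (θ₁û₀ + (1−θ₁)û₁), r_b := g_b − (û_n − û_{n−1})/h, and define the internal residual r^I_h := F^I − (A^I + A^B + A^{B,N})·û. Define the split coarse residual r^{SPLIT}_{2h} := 𝓘·r^I_h + r^B_{2h} + r^λ_{2h} + r^N_{2h}, where r^B_{2h} = (1/(2h))(−r_a, r_a, 0,…,0)ᵀ, r^λ_{2h} = (λ/2)((1+θ₁)r_a, (1−θ₁)r_a, 0,…,0)ᵀ and r^N_{2h} = (1/2)(0,…,0,(1−θ₂)r_b, (1+θ₂)r_b)ᵀ in ℝ^{n/2+1}. Define the standard coarse residual r_{2h} := 𝓘·(F^I + F^B + F^λ + F^N − (A^I + A^B + (A^B)ᵀ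 + A^λ)·û). Then r^{SPLIT}_{2h} = r_{2h}. -/
open Matrix

/-- The internal stiffness matrix `A^I` of the 1D ghost-FEM. -/
noncomputable def AI (n : ℕ) (h θ₁ θ₂ : ℝ) : Matrix (Fin (n + 1)) (Fin (n + 1)) ℝ := fun i j =>
  if (i : ℕ) = 0 ∧ (j : ℕ) = 0 then θ₁ / h
  else if ((i : ℕ) = 0 ∧ (j : ℕ) = 1) ∨ ((i : ℕ) = 1 ∧ (j : ℕ) = 0) then -θ₁ / h
  else if (i : ℕ) = 1 ∧ (j : ℕ) = 1 then (1 + θ₁) / h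
  else if (i : ℕ) = (j : ℕ) ∧ 2 ≤ (i : ℕ) ∧ (i : ℕ) ≤ n - 2 then 2 / h
  else if ((j : ℕ) = (i : ℕ) + 1 ∧ 1 ≤ (i : ℕ) ∧ (i : ℕ) ≤ n - 2) ∨
          ((i : ℕ) = (j : ℕ) + 1 ∧ 1 ≤ (j : ℕ) ∧ (j : ℕ) ≤ n - 2) then -1 / h
  else if (i : ℕ) = n - 1 ∧ (j : ℕ) = n - 1 then (1 + θ₂) / h
  else if ((i : ℕ) = n - 1 ∧ (j : ℕ) = n) ∨ ((i : ℕ) = n ∧ (j : ℕ) = n - 1) then -θ₂ / h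
  else if (i : ℕ) = n ∧ (j : ℕ) = n then θ₂ / h
  else 0

/-- The Nitsche consistency matrix `A^B` of the 1D ghost-FEM. -/
noncomputable def AB (n : ℕ) (h θ₁ : ℝ) : Matrix (Fin (n + 1)) (Fin (n + 1)) ℝ := fun i j =>
  if (i : ℕ) = 0 ∧ (j : ℕ) = 0 then -θ₁ / h
  else if (i : ℕ) = 0 ∧ (j : ℕ) = 1 then θ₁ / h
  else if (i : ℕ) = 1 ∧ (j : ℕ) = 0 then (θ₁ - 1) / h
  else if (i : ℕ) = 1 ∧ (j : ℕ) = 1 then (1 - θ₁) / h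
  else 0

/-- The Nitsche penalty matrix `A^λ` of the 1D ghost-FEM. -/
noncomputable def Alam (n : ℕ) (lam θ₁ : ℝ) : Matrix (Fin (n + 1)) (Fin (n + 1)) ℝ := fun i j =>
  if (i : ℕ) = 0 ∧ (j : ℕ) = 0 then lam * θ₁ ^ 2
  else if ((i : ℕ) = 0 ∧ (j : ℕ) = 1) ∨ ((i : ℕ) = 1 ∧ (j : ℕ) = 0) then lam * θ₁ * (1 - θ₁)
  else if (i : ℕ) = 1 ∧ (j : ℕ) = 1 then lam * (1 - θ₁) ^ 2
  else 0

/-- The Neumann boundary flux matrix `A^{B,N}` of the 1D ghost-FEM. -/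
noncomputable def ABN (n : ℕ) (h θ₂ : ℝ) : Matrix (Fin (n + 1)) (Fin (n + 1)) ℝ := fun i j =>
  if (i : ℕ) = n - 1 ∧ (j : ℕ) = n - 1 then (1 - θ₂) / h
  else if (i : ℕ) = n - 1 ∧ (j : ℕ) = n then (θ₂ - 1) / h
  else if (i : ℕ) = n ∧ (j : ℕ) = n - 1 then θ₂ / h
  else if (i : ℕ) = n ∧ (j : ℕ) = n then -θ₂ / h
  else 0

/-- `F^B = (1/h)(-g_a, g_a, 0, …, 0)ᵀ`. -/
noncomputable def FB (n : ℕ) (h ga : ℝ) : Fin (n + 1) → ℝ := fun k =>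
  if (k : ℕ) = 0 then -ga / h else if (k : ℕ) = 1 then ga / h else 0

/-- `F^λ = λ(θ₁ g_a, (1-θ₁) g_a, 0, …, 0)ᵀ`. -/
noncomputable def Flam (n : ℕ) (lam θ₁ ga : ℝ) : Fin (n + 1) → ℝ := fun k =>
  if (k : ℕ) = 0 then lam * (θ₁ * ga)
  else if (k : ℕ) = 1 then lam * ((1 - θ₁) * ga) else 0

/-- `F^N = (0, …, 0, (1-θ₂) g_b, θ₂ g_b)ᵀ`. -/
noncomputable def FN (n : ℕ) (θ₂ gb : ℝ) : Fin (n + 1) → ℝ := fun k =>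
  if (k : ℕ) = n - 1 then (1 - θ₂) * gb else if (k : ℕ) = n then θ₂ * gb else 0

/-!
The two residuals differ by the fine-grid vector
`v = F^B + F^λ + F^N - ((A^B)ᵀ + A^λ - A^{B,N}) û`. The matrices `(A^B)ᵀ` and `A^λ` only see
`û` through its trace `θ₁ û₀ + (1 - θ₁) û₁` at `a`, and `A^{B,N}` only through the difference
quotient `(û_n - û_{n-1}) / h` at `b`; so `v` is `(-r_a / h + λ θ₁ r_a, r_a / h + λ (1 - θ₁) r_a)`
on the nodes `0, 1`, `((1 - θ₂) r_b, θ₂ r_b)` on the nodes `n - 1, n`, and zero elsewhere.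
For even `n` full weighting maps the fine unit vectors `e₀, e₁` to `E₀, (E₀ + E₁) / 2` and
`e_{n-1}, e_n` to `(E_{n/2-1} + E_{n/2}) / 2, E_{n/2}`, so `𝓘 v` is exactly
`r^B_{2h} + r^λ_{2h} + r^N_{2h}`.
-/

theorem Matrix.mulVec_apply_eq_add_of_support_pair {m n R : Type*} [Fintype n] [DecidableEq n]
    [NonUnitalNonAssocSemiring R] (M : Matrix m n R) (v : n → R) (i : m) {a b : n} (hab : a ≠ b)
    (hzero : ∀ j, j ≠ a → j ≠ b → M i j * v j = 0) :
    (M *ᵥ v) i = M i a * v a + M i b * v b := by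
  rw [mulVec, dotProduct, ← Finset.sum_subset (Finset.subset_univ {a, b}), Finset.sum_pair hab]
  intro j _ hj
  simp only [Finset.mem_insert, Finset.mem_singleton, not_or] at hj
  exact hzero j hj.1 hj.2

def headVec (m : ℕ) (x y : ℝ) : Fin (m + 1) → ℝ := fun k =>
  if (k : ℕ) = 0 then x else if (k : ℕ) = 1 then y else 0

def tailVec (m : ℕ) (x y : ℝ) : Fin (m + 1) → ℝ := fun k =>
  if (k : ℕ) = m - 1 then x else if (k : ℕ) = m then y else 0

theorem headVec_add (m : ℕ) (x y x' y' : ℝ) :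
    headVec m x y + headVec m x' y' = headVec m (x + x') (y + y') := by
  funext k
  simp only [headVec, Pi.add_apply]
  split_ifs <;> ring

theorem restrict_mulVec_headVec {n : ℕ} (hn : 1 ≤ n) (x y : ℝ) :
    restrict n *ᵥ headVec n x y = headVec (n / 2) (x + y / 2) (y / 2) := by
  funext k
  rw [mulVec_apply_eq_add_of_support_pair _ _ _ (a := 0) (b := ⟨1, by omega⟩)
    (by simp [Fin.ext_iff])]
  · simp only [restrict, headVec, Fin.val_zero, zero_add]
    split_ifs <;> grind
  · intro j h0 h1
    rw [← Fin.val_ne_iff, Fin.val_zero] at h0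
    rw [← Fin.val_ne_iff] at h1
    simp [headVec, h0, h1]

theorem restrict_mulVec_tailVec {n : ℕ} (hn : Even n) (hn2 : 2 ≤ n) (x y : ℝ) :
    restrict n *ᵥ tailVec n x y = tailVec (n / 2) (x / 2) (x / 2 + y) := by
  obtain ⟨m, rfl⟩ := hn
  funext k
  rw [mulVec_apply_eq_add_of_support_pair _ _ _ (a := ⟨m + m - 1, by omega⟩) (b := Fin.last _)
    (by simp [Fin.ext_iff]; omega)]
  · simp only [restrict, tailVec, Fin.val_last]
    split_ifs <;> grind
  · intro j h0 h1
    rw [← Fin.val_ne_iff] at h0 h1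
    simp_all [tailVec]

theorem FB_add_Flam_sub_mulVec {n : ℕ} (hn : 1 ≤ n) (h lam θ₁ ga ra : ℝ)
    (u : Fin (n + 1) → ℝ)
    (hra : ra = ga - (θ₁ * u ⟨0, n.succ_pos⟩ + (1 - θ₁) * u ⟨1, Nat.succ_lt_succ hn⟩)) :
    FB n h ga + Flam n lam θ₁ ga - ((AB n h θ₁)ᵀ + Alam n lam θ₁) *ᵥ u =
      headVec n (-ra / h + lam * θ₁ * ra) (ra / h + lam * (1 - θ₁) * ra) := by
  subst hra
  funext i
  rw [Pi.sub_apply, mulVec_apply_eq_add_of_support_pair _ _ _ (a := ⟨0, by omega⟩)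
    (b := ⟨1, by omega⟩) (by simp [Fin.ext_iff])]
  · rcases i with ⟨_ | _ | i, hi⟩ <;> simp [FB, Flam, AB, Alam, headVec] <;> ring
  · intro j h0 h1
    rw [ne_eq, Fin.ext_iff] at h0 h1
    simp [AB, Alam, h0, h1]

theorem FN_add_ABN_mulVec {n : ℕ} (hn : 1 ≤ n) (h θ₂ gb rb : ℝ) (u : Fin (n + 1) → ℝ)
    (hrb : rb = gb - (u (Fin.last n) - u ⟨n - 1, n.sub_lt_succ 1⟩) / h) :
    FN n θ₂ gb + ABN n h θ₂ *ᵥ u = tailVec n ((1 - θ₂) * rb) (θ₂ * rb) := by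
  subst hrb
  funext i
  rw [Pi.add_apply, mulVec_apply_eq_add_of_support_pair _ _ _ (a := ⟨n - 1, by omega⟩)
    (b := ⟨n, by omega⟩) (by simp; omega)]
  · simp only [FN, ABN, tailVec]
    split_ifs <;> grind
  · intro j h0 h1
    rw [ne_eq, Fin.ext_iff] at h0 h1
    simp [ABN, h0, h1]

/-- Equivalence of the splitting and standard restriction strategies:
`r^{SPLIT}_{2h} = r_{2h} = 𝓘 r_h`. -/
theorem splitting_equals_standard (n : ℕ) (hn : Even n) (hn4 : 4 ≤ n)
    (h θ₁ θ₂ lam ga gb : ℝ)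
    (FI u : Fin (n + 1) → ℝ) :
    let ra : ℝ := ga - (θ₁ * u ⟨0, by omega⟩ + (1 - θ₁) * u ⟨1, by omega⟩)
    let rb : ℝ := gb - (u ⟨n, by omega⟩ - u ⟨n - 1, by omega⟩) / h
    let rI : Fin (n + 1) → ℝ := FI - (AI n h θ₁ θ₂ + AB n h θ₁ + ABN n h θ₂).mulVec u
    let rB2h : Fin (n / 2 + 1) → ℝ := fun k =>
      if (k : ℕ) = 0 then -ra / (2 * h) else if (k : ℕ) = 1 then ra / (2 * h) else 0
    let rlam2h : Fin (n / 2 + 1) → ℝ := fun k =>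
      if (k : ℕ) = 0 then (lam / 2) * ((1 + θ₁) * ra)
      else if (k : ℕ) = 1 then (lam / 2) * ((1 - θ₁) * ra) else 0
    let rN2h : Fin (n / 2 + 1) → ℝ := fun k =>
      if (k : ℕ) = n / 2 - 1 then (1 / 2) * ((1 - θ₂) * rb)
      else if (k : ℕ) = n / 2 then (1 / 2) * ((1 + θ₂) * rb) else 0
    (restrict n).mulVec rI + rB2h + rlam2h + rN2h
      = (restrict n).mulVec
          (FI + FB n h ga + Flam n lam θ₁ ga + FN n θ₂ gb
            - (AI n h θ₁ θ₂ + AB n h θ₁ + (AB n h θ₁)ᵀ + Alam n lam θ₁).mulVec u) := by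
  intro ra rb rI rB2h rlam2h rN2h
  have hsplit : FI + FB n h ga + Flam n lam θ₁ ga + FN n θ₂ gb
      - (AI n h θ₁ θ₂ + AB n h θ₁ + (AB n h θ₁)ᵀ + Alam n lam θ₁) *ᵥ u
      = rI + (FB n h ga + Flam n lam θ₁ ga - ((AB n h θ₁)ᵀ + Alam n lam θ₁) *ᵥ u)
        + (FN n θ₂ gb + ABN n h θ₂ *ᵥ u) := by
    simp only [rI, add_mulVec]
    abel
  have hB : rB2h = headVec (n / 2) (-ra / (2 * h)) (ra / (2 * h)) := rfl
  have hlam : rlam2h = headVec (n / 2) (lam / 2 * ((1 + θ₁) * ra)) (lam / 2 * ((1 - θ₁) * ra)) :=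
    rfl
  have hN : rN2h = tailVec (n / 2) (1 / 2 * ((1 - θ₂) * rb)) (1 / 2 * ((1 + θ₂) * rb)) := rfl
  rw [hsplit, FB_add_Flam_sub_mulVec (by omega) h lam θ₁ ga ra u rfl,
    FN_add_ABN_mulVec (by omega) h θ₂ gb rb u rfl, mulVec_add, mulVec_add,
    restrict_mulVec_headVec (by omega), restrict_mulVec_tailVec hn (by omega),
    hB, hlam, hN, add_assoc (restrict n *ᵥ rI), headVec_add]
  congr 1
  · congr 2 <;> ring
  · congr 1 <;> ring
end

section
/- (Galerkin coarse-grid operator equals the directly assembled coarse operator in 1D.) For even n, h > 0, θ₁, θ₂ ∈ (0,1] and λ ∈ ℝ, let A(n, h, θ₁, θ₂, λ) := A^I + A^B + (A^B)ᵀ + A^λ ∈ ℝ^{(n+1)×(n+1)} be the 1D ghost-FEM matrix defined in the context. Then for every even integer n ≥ 8, 𝓘 · A(n, h, θ₁, θ₂, λ) · 𝓘ᵀ = A(n/2, 2h, (1+θ₁)/2, (1+θ₂)/2, λ), i.e. the Galerkin coarse operator obtained from the full-weighting restriction 𝓘 and its transpose coincides with the ghost-FEM matrix assembled directly on the coarse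 grid of step 2h with cut fractions θ₁' = (1+θ₁)/2, θ₂' = (1+θ₂)/2 and the same stabilization parameter λ. -/
/-!
`A` is assembled from elements. With `dₖ = eₖ - eₖ₊₁` and the trace vector
`t = θ₁ e₀ + (1 - θ₁) e₁`, we have `A = ∑ₖ wₖ dₖ dₖᵀ - h⁻¹ (t d₀ᵀ + d₀ tᵀ) + λ t tᵀ`, where the
element weight `wₖ` is `1/h`, except `θ₁/h` and `θ₂/h` on the two cut elements. Full weighting
sends both fine differences `d₂ᵢ` and `d₂ᵢ₊₁` to `½ dᵢ'`, and `t` to the coarse trace vector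
with `θ₁' = (1 + θ₁)/2`. Since `𝓘 (u vᵀ) 𝓘ᵀ = (𝓘 u)(𝓘 v)ᵀ`, the Galerkin product has the same
form on the coarse grid, with weights `(w₂ᵢ + w₂ᵢ₊₁)/4`; these are the coarse element weights
for step `2h`.
-/

open Matrix

/-- The full 1D ghost-FEM matrix `A = A^I + A^B + (A^B)ᵀ + A^λ`. -/
noncomputable def Afull (n : ℕ) (h θ₁ θ₂ lam : ℝ) : Matrix (Fin (n + 1)) (Fin (n + 1)) ℝ :=
  AI n h θ₁ θ₂ + AB n h θ₁ + (AB n h θ₁)ᵀ + Alam n lam θ₁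

lemma mul_vecMulVec_mul_transpose {l m α : Type*} [Fintype m] [CommSemiring α] (M : Matrix l m α)
    (u v : m → α) :
    M * vecMulVec u v * Mᵀ = vecMulVec (M *ᵥ u) (M *ᵥ v) := by
  rw [mul_vecMulVec, vecMulVec_mul, vecMul_transpose]

lemma sum_range_two_mul {M : Type*} [AddCommMonoid M] (f : ℕ → M) (m : ℕ) :
    ∑ k ∈ Finset.range (2 * m), f k = ∑ i ∈ Finset.range m, (f (2 * i) + f (2 * i + 1)) := by
  induction m with
  | zero => simp
  | succ m ih =>
    rw [show 2 * (m + 1) = 2 * m + 1 + 1 by ring, Finset.sum_range_succ, Finset.sum_range_succ, ih,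
      Finset.sum_range_succ, add_assoc]

namespace GhostFEM

/-- The `k`-th unit vector; it is `0` when `k > n`. -/
def nodal (n k : ℕ) : Fin (n + 1) → ℝ := fun j => if (j : ℕ) = k then 1 else 0

def edgeVec (n k : ℕ) : Fin (n + 1) → ℝ := nodal n k - nodal n (k + 1)

/-- `traceVec n θ ⬝ᵥ u` is the value of the piecewise linear interpolant of `u` at the boundary
point, which lies in the first element at distance `θ h` from node `1` (`h` the grid step). -/
def traceVec (n : ℕ) (θ : ℝ) : Fin (n + 1) → ℝ := θ • nodal n 0 + (1 - θ) • nodal n 1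

noncomputable def elementWeight (n : ℕ) (h θ₁ θ₂ : ℝ) (k : ℕ) : ℝ :=
  if k = 0 then θ₁ / h else if k + 1 = n then θ₂ / h else 1 / h

noncomputable def stiffness (n : ℕ) (w : ℕ → ℝ) : Matrix (Fin (n + 1)) (Fin (n + 1)) ℝ :=
  ∑ k ∈ Finset.range n, w k • vecMulVec (edgeVec n k) (edgeVec n k)

lemma sum_range_mul_nodal (n m : ℕ) (w : ℕ → ℝ) (i j : Fin (n + 1)) (a b : ℕ) :
    ∑ k ∈ Finset.range m, w k * (nodal n (k + a) i * nodal n (k + b) j) =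
      if a ≤ i ∧ (i : ℕ) - a < m ∧ (i : ℕ) + b = j + a then w (i - a) else 0 := by
  have hterm : ∀ k, w k * (nodal n (k + a) i * nodal n (k + b) j) =
      if k = i - a then (if a ≤ i ∧ (i : ℕ) + b = j + a then w k else 0) else 0 := by
    intro k
    simp only [nodal]
    split_ifs <;> first | (exfalso; omega) | ring
  simp only [hterm, Finset.sum_ite_eq', Finset.mem_range]
  split_ifs <;> first | rfl | omega

lemma stiffness_apply (n : ℕ) (w : ℕ → ℝ) (i j : Fin (n + 1)) :
    stiffness n w i j =
      (if (i : ℕ) = j ∧ (i : ℕ) < n then w i else 0)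
      + (if 0 < (i : ℕ) ∧ (i : ℕ) = j then w (i - 1) else 0)
      - (if (j : ℕ) = i + 1 then w i else 0) - (if (i : ℕ) = j + 1 then w j else 0) := by
  have h00 := sum_range_mul_nodal n n w i j 0 0
  have h01 := sum_range_mul_nodal n n w i j 0 1
  have h10 := sum_range_mul_nodal n n w i j 1 0
  have h11 := sum_range_mul_nodal n n w i j 1 1
  simp only [add_zero, Nat.sub_zero, zero_le, true_and] at h00 h01 h10
  rw [stiffness, Matrix.sum_apply]
  simp only [Matrix.smul_apply, vecMulVec_apply, edgeVec, Pi.sub_apply, sub_mul, mul_sub,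
    smul_eq_mul, Finset.sum_sub_distrib, h00, h01, h10, h11]
  grind

lemma AI_eq_stiffness (n : ℕ) (hn : 3 ≤ n) (h θ₁ θ₂ : ℝ) :
    AI n h θ₁ θ₂ = stiffness n (elementWeight n h θ₁ θ₂) := by
  ext i j
  rw [stiffness_apply]
  unfold AI elementWeight
  grind (splits := 30)

lemma AB_eq_vecMulVec (n : ℕ) (h θ : ℝ) :
    AB n h θ = -h⁻¹ • vecMulVec (traceVec n θ) (edgeVec n 0) := by
  ext i j
  simp only [AB, traceVec, edgeVec, nodal, Matrix.smul_apply, vecMulVec_apply, Pi.add_apply,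
    Pi.sub_apply, Pi.smul_apply, smul_eq_mul]
  grind

lemma Alam_eq_vecMulVec (n : ℕ) (lam θ : ℝ) :
    Alam n lam θ = lam • vecMulVec (traceVec n θ) (traceVec n θ) := by
  ext i j
  simp only [Alam, traceVec, nodal, Matrix.smul_apply, vecMulVec_apply, Pi.add_apply,
    Pi.smul_apply, smul_eq_mul]
  grind

lemma Afull_eq_stiffness_sub_add (n : ℕ) (hn : 3 ≤ n) (h θ₁ θ₂ lam : ℝ) :
    Afull n h θ₁ θ₂ lam = stiffness n (elementWeight n h θ₁ θ₂)
      - h⁻¹ • (vecMulVec (traceVec n θ₁) (edgeVec n 0) + vecMulVec (edgeVec n 0) (traceVec n θ₁))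
      + lam • vecMulVec (traceVec n θ₁) (traceVec n θ₁) := by
  rw [Afull, AI_eq_stiffness n hn, AB_eq_vecMulVec, Alam_eq_vecMulVec, transpose_smul,
    transpose_vecMulVec, smul_add, neg_smul, neg_smul]
  abel

lemma nodal_eq_single (n k : ℕ) (hk : k ≤ n) :
    nodal n k = Pi.single (⟨k, by omega⟩ : Fin (n + 1)) 1 := by
  ext j
  simp only [nodal, Pi.single_apply, Fin.ext_iff]

lemma restrict_mulVec_nodal_two_mul (n k : ℕ) (hk : 2 * k ≤ n) :
    restrict n *ᵥ nodal n (2 * k) = nodal (n / 2) k := by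
  ext a
  rw [nodal_eq_single n _ hk, mulVec_single_one]
  simp only [col_apply, restrict, nodal]
  grind

lemma restrict_mulVec_nodal_two_mul_add_one (n k : ℕ) (hk : 2 * k + 1 ≤ n) :
    restrict n *ᵥ nodal n (2 * k + 1)
      = (1 / 2 : ℝ) • (nodal (n / 2) k + nodal (n / 2) (k + 1)) := by
  ext a
  rw [nodal_eq_single n _ hk, mulVec_single_one]
  simp only [col_apply, restrict, nodal, Pi.smul_apply, Pi.add_apply, smul_eq_mul]
  grind

lemma restrict_mulVec_edgeVec (n k : ℕ) (hk : k + 1 ≤ n) :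
    restrict n *ᵥ edgeVec n k = (1 / 2 : ℝ) • edgeVec (n / 2) (k / 2) := by
  obtain ⟨i, rfl | rfl⟩ := Nat.even_or_odd' k
  · rw [edgeVec, mulVec_sub, restrict_mulVec_nodal_two_mul n i (by omega),
      restrict_mulVec_nodal_two_mul_add_one n i hk, edgeVec, Nat.mul_div_cancel_left i two_pos]
    module
  · rw [edgeVec, mulVec_sub, restrict_mulVec_nodal_two_mul_add_one n i (by omega),
      show 2 * i + 1 + 1 = 2 * (i + 1) by ring, restrict_mulVec_nodal_two_mul n (i + 1) hk, edgeVec,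
      show (2 * i + 1) / 2 = i by omega]
    module

lemma restrict_mulVec_traceVec (n : ℕ) (hn : 1 ≤ n) (θ : ℝ) :
    restrict n *ᵥ traceVec n θ = traceVec (n / 2) ((1 + θ) / 2) := by
  have h0 := restrict_mulVec_nodal_two_mul n 0 (by omega)
  have h1 := restrict_mulVec_nodal_two_mul_add_one n 0 hn
  rw [Nat.mul_zero] at h0 h1
  rw [traceVec, mulVec_add, mulVec_smul, mulVec_smul, h0, h1, zero_add, traceVec]
  module

lemma restrict_conj_stiffness (n : ℕ) (hn : Even n) (w : ℕ → ℝ) :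
    restrict n * stiffness n w * (restrict n)ᵀ
      = stiffness (n / 2) (fun i => (w (2 * i) + w (2 * i + 1)) / 4) := by
  have hconj : ∀ k ∈ Finset.range n,
      restrict n * (w k • vecMulVec (edgeVec n k) (edgeVec n k)) * (restrict n)ᵀ
        = (w k / 4) • vecMulVec (edgeVec (n / 2) (k / 2)) (edgeVec (n / 2) (k / 2)) := by
    intro k hk
    rw [Matrix.mul_smul, Matrix.smul_mul, mul_vecMulVec_mul_transpose,
      restrict_mulVec_edgeVec n k (Finset.mem_range.mp hk), smul_vecMulVec, vecMulVec_smul,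
      smul_smul, smul_smul]
    congr 1
    ring
  obtain ⟨m, rfl⟩ := hn
  rw [stiffness, Matrix.mul_sum, Matrix.sum_mul, Finset.sum_congr rfl hconj, ← two_mul,
    sum_range_two_mul, stiffness, Nat.mul_div_cancel_left m two_pos]
  refine Finset.sum_congr rfl fun i _ => ?_
  rw [show (2 * i + 1) / 2 = i by omega, Nat.mul_div_cancel_left i two_pos, ← add_smul, add_div]

lemma elementWeight_coarse (n : ℕ) (hn : Even n) (hn4 : 4 ≤ n) (h θ₁ θ₂ : ℝ) :
    (fun i => (elementWeight n h θ₁ θ₂ (2 * i) + elementWeight n h θ₁ θ₂ (2 * i + 1)) / 4)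
      = elementWeight (n / 2) (2 * h) ((1 + θ₁) / 2) ((1 + θ₂) / 2) := by
  obtain ⟨m, rfl⟩ := hn
  ext i
  unfold elementWeight
  grind

lemma restrict_conj_nitsche (n : ℕ) (hn : 1 ≤ n) (θ : ℝ) :
    restrict n * (vecMulVec (traceVec n θ) (edgeVec n 0) + vecMulVec (edgeVec n 0) (traceVec n θ))
        * (restrict n)ᵀ
      = (1 / 2 : ℝ) • (vecMulVec (traceVec (n / 2) ((1 + θ) / 2)) (edgeVec (n / 2) 0)
        + vecMulVec (edgeVec (n / 2) 0) (traceVec (n / 2) ((1 + θ) / 2))) := by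
  rw [Matrix.mul_add, Matrix.add_mul, mul_vecMulVec_mul_transpose, mul_vecMulVec_mul_transpose,
    restrict_mulVec_traceVec n hn, restrict_mulVec_edgeVec n 0 hn, Nat.zero_div, vecMulVec_smul,
    smul_vecMulVec, smul_add]

end GhostFEM

open GhostFEM

theorem galerkin_eq_direct_assembly_general (n : ℕ) (hn : Even n) (hn8 : 8 ≤ n)
    (h θ₁ θ₂ lam : ℝ) :
    restrict n * Afull n h θ₁ θ₂ lam * (restrict n)ᵀ
      = Afull (n / 2) (2 * h) ((1 + θ₁) / 2) ((1 + θ₂) / 2) lam := by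
  rw [Afull_eq_stiffness_sub_add n (by omega), Afull_eq_stiffness_sub_add (n / 2) (by omega),
    Matrix.mul_add, Matrix.add_mul, Matrix.mul_sub, Matrix.sub_mul, Matrix.mul_smul,
    Matrix.smul_mul, Matrix.mul_smul, Matrix.smul_mul]
  rw [restrict_conj_stiffness n hn, elementWeight_coarse n hn (by omega),
    restrict_conj_nitsche n (by omega), smul_smul, show h⁻¹ * (1 / 2 : ℝ) = (2 * h)⁻¹ by ring,
    mul_vecMulVec_mul_transpose, restrict_mulVec_traceVec n (by omega)]

/-- The Galerkin coarse-grid operator `𝓘 A 𝓘ᵀ` equals the 1D ghost-FEM matrix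
assembled directly on the coarse grid of step `2h` with cut fractions
`(1+θ₁)/2` and `(1+θ₂)/2` and the same stabilization parameter `λ`. -/
theorem galerkin_eq_direct_assembly (n : ℕ) (hn : Even n) (hn8 : 8 ≤ n)
    (h θ₁ θ₂ lam : ℝ) (hh : 0 < h)
    (hθ₁ : θ₁ ∈ Set.Ioc (0 : ℝ) 1) (hθ₂ : θ₂ ∈ Set.Ioc (0 : ℝ) 1) :
    restrict n * Afull n h θ₁ θ₂ lam * (restrict n)ᵀ
      = Afull (n / 2) (2 * h) ((1 + θ₁) / 2) ((1 + θ₂) / 2) lam :=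
  galerkin_eq_direct_assembly_general n hn hn8 h θ₁ θ₂ lam
end

section
/- Let C > 0 and λ > C be real numbers. Then there exists a constant C̃ > 0 such that for all real numbers G, p, q with G ≥ 0 and q² ≤ C·G, one has G + λp² − 2pq ≥ C̃·(G + λp²). In particular, if the stabilization parameter λ exceeds the trace constant C, the Nitsche bilinear form is coercive with respect to the norm whose square is G + λp². -/
/-!
Put `t = √(C/λ) < 1`. The trace bound gives `p²q² ≤ (tλp²)(tG)`, so by AM–GM
`2pq ≤ t(λp² + G)`, and hence `G + λp² - 2pq ≥ (1 - t)(G + λp²)`. The constant `1 - √(C/λ)`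
is sharp: equality holds for `q = √(CG)` and `√λ p = √G`.
-/

lemma two_mul_le_add_of_sq_mul_sq_le {a b x y : ℝ} (h : a ^ 2 * b ^ 2 ≤ x * y)
    (hxy : 0 ≤ x + y) : 2 * a * b ≤ x + y := by
  refine le_of_sq_le_sq ?_ hxy
  calc (2 * a * b) ^ 2 = 4 * (a ^ 2 * b ^ 2) := by ring
    _ ≤ 4 * (x * y) := by gcongr
    _ = (x + y) ^ 2 - (x - y) ^ 2 := by ring
    _ ≤ (x + y) ^ 2 := sub_le_self _ (sq_nonneg _)

lemma nitsche_form_ge {C lam G p q : ℝ} (hC : 0 ≤ C) (hlam : 0 < lam) (hG : 0 ≤ G)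
    (hq : q ^ 2 ≤ C * G) :
    (1 - √(C / lam)) * (G + lam * p ^ 2) ≤ G + lam * p ^ 2 - 2 * p * q := by
  set t := √(C / lam)
  have ht : 0 ≤ t := Real.sqrt_nonneg _
  have htsq : t ^ 2 * lam = C := by
    rw [Real.sq_sqrt (div_nonneg hC hlam.le), div_mul_cancel₀ _ hlam.ne']
  have hcross : 2 * p * q ≤ t * (lam * p ^ 2) + t * G := by
    refine two_mul_le_add_of_sq_mul_sq_le ?_ (by positivity)
    calc p ^ 2 * q ^ 2 ≤ p ^ 2 * (C * G) := by gcongr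
      _ = t * (lam * p ^ 2) * (t * G) := by rw [← htsq]; ring
  linarith

/-- Coercivity of the Nitsche bilinear form: if the stabilization parameter `λ`
exceeds the trace constant `C`, then there is `C̃ > 0` with
`G + λp² - 2pq ≥ C̃(G + λp²)` whenever `G ≥ 0` and `q² ≤ C·G`. -/
theorem nitsche_coercive (C lam : ℝ) (hC : 0 < C) (hlam : C < lam) :
    ∃ Ctil : ℝ, 0 < Ctil ∧
      ∀ G p q : ℝ, 0 ≤ G → q ^ 2 ≤ C * G →
        G + lam * p ^ 2 - 2 * p * q ≥ Ctil * (G + lam * p ^ 2) := by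
  have hlam0 : 0 < lam := hC.trans hlam
  have hsqrt : √(C / lam) < 1 :=
    (Real.sqrt_lt' one_pos).2 (by rw [one_pow, div_lt_one hlam0]; exact hlam)
  exact ⟨1 - √(C / lam), sub_pos.2 hsqrt,
    fun G p q hG hq => nitsche_form_ge hC.le hlam0 hG hq⟩
end

section
/- (Sharpness of the trace constant.) Let n ≥ 2 be an integer, h > 0 and θ₁, θ₂ ∈ (0,1]. If C' is a real number such that ((u₁ − u₀)/h)² ≤ C' · [ θ₁(u₁ − u₀)²/h + Σ_{i=1}^{n−2} (u_{i+1} − u_i)²/h + θ₂(u_n − u_{n−1})²/h ] holds for all real u₀, u₁, …, u_n, then C' ≥ 1/(θ₁h). Hence 1/(θ₁h) is the smallest admissible trace constant, attained for example at (u₀, u₁, …, u_n) = (1, 0, …, 0). -/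
/-! Testing with the hat function at the cut node, `u = (1, 0, …, 0)`, kills every term of the
energy except the cut-cell one, so the inequality collapses to `1 / h² ≤ C' θ₁ / h`. -/

/-- The bracketed discrete energy, i.e. `∫_a^b (v')²` for the piecewise-linear `v` with nodal
values `u`. -/
noncomputable def cutCellEnergy (n : ℕ) (h θ₁ θ₂ : ℝ) (u : ℕ → ℝ) : ℝ :=
  θ₁ * (u 1 - u 0) ^ 2 / h + ∑ i ∈ Finset.Icc 1 (n - 2), (u (i + 1) - u i) ^ 2 / h
    + θ₂ * (u n - u (n - 1)) ^ 2 / h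

lemma cutCellEnergy_of_eq_zero_of_one_le {n : ℕ} (hn : n ≠ 1) (h θ₁ θ₂ : ℝ) {u : ℕ → ℝ}
    (hu : ∀ i, 1 ≤ i → u i = 0) : cutCellEnergy n h θ₁ θ₂ u = θ₁ * u 0 ^ 2 / h := by
  have interior : ∑ i ∈ Finset.Icc 1 (n - 2), (u (i + 1) - u i) ^ 2 / h = 0 :=
    Finset.sum_eq_zero fun i hi => by
      rw [hu (i + 1) (by omega), hu i (Finset.mem_Icc.mp hi).1]
      simp
  have right : u n - u (n - 1) = 0 := by
    rcases Nat.eq_zero_or_pos n with rfl | hpos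
    · simp
    · rw [hu n hpos, hu (n - 1) (by omega), sub_self]
  simp [cutCellEnergy, interior, right, hu 1 le_rfl]

theorem trace_constant_sharp_general (n : ℕ) (hn : 2 ≤ n) (h θ₁ θ₂ : ℝ)
    (hh : 0 < h) (hθ₁ : θ₁ ∈ Set.Ioc (0 : ℝ) 1)
    (C' : ℝ)
    (hC' : ∀ u : ℕ → ℝ,
      ((u 1 - u 0) / h) ^ 2
        ≤ C' *
            (θ₁ * (u 1 - u 0) ^ 2 / h
              + ∑ i ∈ Finset.Icc 1 (n - 2), (u (i + 1) - u i) ^ 2 / h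
              + θ₂ * (u n - u (n - 1)) ^ 2 / h)) :
    C' ≥ 1 / (θ₁ * h) := by
  have hat : 1 / h ^ 2 ≤ C' * θ₁ / h := by
    have key : _ ≤ C' * cutCellEnergy n h θ₁ θ₂ (Pi.single 0 1) := hC' (Pi.single 0 1)
    rw [cutCellEnergy_of_eq_zero_of_one_le (by omega) h θ₁ θ₂
        fun i hi => Pi.single_eq_of_ne (by omega) 1,
      Pi.single_eq_same, Pi.single_eq_of_ne one_ne_zero] at key
    simpa [div_pow, mul_div_assoc] using key
  rw [ge_iff_le, div_le_iff₀ (mul_pos hθ₁.1 hh)]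
  calc 1 = h ^ 2 * (1 / h ^ 2) := by field_simp
    _ ≤ h ^ 2 * (C' * θ₁ / h) := by gcongr
    _ = C' * (θ₁ * h) := by field_simp

/-- Sharpness of the trace constant: any constant `C'` valid in the discrete
trace inequality for all nodal values satisfies `C' ≥ 1/(θ₁h)`. -/
theorem trace_constant_sharp (n : ℕ) (hn : 2 ≤ n) (h θ₁ θ₂ : ℝ)
    (hh : 0 < h) (hθ₁ : θ₁ ∈ Set.Ioc (0 : ℝ) 1) (hθ₂ : θ₂ ∈ Set.Ioc (0 : ℝ) 1)
    (C' : ℝ)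
    (hC' : ∀ u : ℕ → ℝ,
      ((u 1 - u 0) / h) ^ 2
        ≤ C' *
            (θ₁ * (u 1 - u 0) ^ 2 / h
              + ∑ i ∈ Finset.Icc 1 (n - 2), (u (i + 1) - u i) ^ 2 / h
              + θ₂ * (u n - u (n - 1)) ^ 2 / h)) :
    C' ≥ 1 / (θ₁ * h) :=
  trace_constant_sharp_general n hn h θ₁ θ₂ hh hθ₁ C' hC'
end

section
/- (Exact positive-definiteness threshold for the 1D ghost-FEM stiffness matrix.) Let n ≥ 2 be an integer, h > 0, θ₁, θ₂ ∈ (0,1] and λ ∈ ℝ. Define the quadratic form Q on ℝ^{n+1} by Q(u) = θ₁(u₁ − u₀)²/h + Σ_{i=1}^{n−2} (u_{i+1} − u_i)²/h + θ₂(u_n − u_{n−1})²/h + 2·(θ₁u₀ + (1−θ₁)u₁)·(u₁ − u₀)/h + λ·(θ₁u₀ + (1−θ₁)u₁)². Then Q(u) > 0 for every nonzero u ∈ ℝ^{n+1} if and only if λ·θ₁·h > 1. -/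
/-!
Completing the square in the terms of `Q` that involve the cut cell `[a, x₁]` gives
`Q(u) = u₁² / (θ₁ h) + (λ - 1 / (θ₁ h)) v(a)² + (energy of the remaining cells)`.
For `λ > 1 / (θ₁ h)` every term is nonnegative, and all of them vanish only if
`u₁ = v(a) = 0`, hence `u₀ = 0`, and `u` is constant on the remaining cells, i.e. `u = 0`.
Conversely, the first nodal basis function `e₀` has `u₁ = 0` and no energy outside the first
cell, so `Q(e₀) = (λ - 1 / (θ₁ h)) θ₁²`.
-/

open Finset

theorem Fin.eq_zero_of_succ_eq_castSucc {α : Type*} [Zero α] {n : ℕ} {u : Fin (n + 1) → α}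
    (h0 : u 0 = 0) (hstep : ∀ i : Fin n, u i.succ = u i.castSucc) : u = 0 := by
  funext i
  induction i using Fin.induction with
  | zero => exact h0
  | succ i ih => rw [hstep, ih]; rfl

noncomputable section

namespace GhostFEM

variable {n : ℕ} {h θ₁ θ₂ lam : ℝ}

def interiorEnergy (n : ℕ) (h : ℝ) (u : Fin (n + 1) → ℝ) : ℝ :=
  ∑ i ∈ univ.filter (fun i : Fin (n + 1) => 1 ≤ (i : ℕ) ∧ (i : ℕ) ≤ n - 2),
    (u (i + 1) - u i) ^ 2 / h

def rightCellEnergy (n : ℕ) (h θ₂ : ℝ) (u : Fin (n + 1) → ℝ) : ℝ :=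
  θ₂ * (u (Fin.last n) - u ⟨n - 1, by omega⟩) ^ 2 / h

/-- `v(a)`, the value of the interpolant at the Dirichlet point `a = (1 - θ₁) h`. -/
def boundaryValue (θ₁ : ℝ) (u : Fin (n + 1) → ℝ) : ℝ :=
  θ₁ * u 0 + (1 - θ₁) * u 1

def ghostForm (n : ℕ) (h θ₁ θ₂ lam : ℝ) (u : Fin (n + 1) → ℝ) : ℝ :=
  θ₁ * (u 1 - u 0) ^ 2 / h + interiorEnergy n h u + rightCellEnergy n h θ₂ u
    + 2 * boundaryValue θ₁ u * (u 1 - u 0) / h + lam * boundaryValue θ₁ u ^ 2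

theorem ghostForm_eq (hθ₁ : θ₁ ≠ 0) (hh : h ≠ 0) (u : Fin (n + 1) → ℝ) :
    ghostForm n h θ₁ θ₂ lam u = u 1 ^ 2 / (θ₁ * h)
      + (lam - 1 / (θ₁ * h)) * boundaryValue θ₁ u ^ 2
      + interiorEnergy n h u + rightCellEnergy n h θ₂ u := by
  unfold ghostForm boundaryValue
  field_simp
  ring

theorem interiorEnergy_nonneg (hh : 0 ≤ h) (u : Fin (n + 1) → ℝ) : 0 ≤ interiorEnergy n h u :=
  sum_nonneg fun _ _ => by positivity

theorem rightCellEnergy_nonneg (hh : 0 ≤ h) (hθ₂ : 0 ≤ θ₂) (u : Fin (n + 1) → ℝ) :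
    0 ≤ rightCellEnergy n h θ₂ u := by
  unfold rightCellEnergy; positivity

theorem interiorEnergy_single_zero (h : ℝ) : interiorEnergy n h (Pi.single 0 1) = 0 := by
  refine sum_eq_zero fun i hi => ?_
  obtain ⟨hi1, hi2⟩ := (mem_filter.mp hi).2
  have hi0 : i ≠ 0 := by rintro rfl; simp at hi1
  have hsucc0 : i + 1 ≠ 0 := by
    intro hc
    have := congrArg Fin.val hc
    rw [Fin.val_add_one_of_lt (by simp [Fin.lt_def]; omega)] at this
    simp at this
  simp [hi0, hsucc0]

theorem rightCellEnergy_single_zero (hn : 2 ≤ n) (h θ₂ : ℝ) :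
    rightCellEnergy n h θ₂ (Pi.single 0 1) = 0 := by
  have hlast : Fin.last n ≠ 0 := by simp [Fin.ext_iff]; omega
  have hprev : (⟨n - 1, by omega⟩ : Fin (n + 1)) ≠ 0 := by simp [Fin.ext_iff]; omega
  simp [rightCellEnergy, hlast, hprev]

theorem ghostForm_single_zero (hn : 2 ≤ n) (hθ₁ : θ₁ ≠ 0) (hh : h ≠ 0) :
    ghostForm n h θ₁ θ₂ lam (Pi.single 0 1) = (lam - 1 / (θ₁ * h)) * θ₁ ^ 2 := by
  have h1 : (1 : Fin (n + 1)) ≠ 0 := by simp [Fin.ext_iff]; omega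
  rw [ghostForm_eq hθ₁ hh, interiorEnergy_single_zero, rightCellEnergy_single_zero hn]
  simp [boundaryValue, h1]

theorem eq_of_interiorEnergy_eq_zero (hh : 0 < h) {u : Fin (n + 1) → ℝ}
    (hE : interiorEnergy n h u = 0) (i : Fin n) (hi₁ : 1 ≤ (i : ℕ)) (hi₂ : (i : ℕ) ≤ n - 2) :
    u i.succ = u i.castSucc := by
  have hmem : i.castSucc ∈ univ.filter
      (fun i : Fin (n + 1) => 1 ≤ (i : ℕ) ∧ (i : ℕ) ≤ n - 2) := by simp [hi₁, hi₂]
  have hterm := (sum_eq_zero_iff_of_nonneg (fun _ _ => by positivity)).mp hE _ hmem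
  rw [Fin.coeSucc_eq_succ, div_eq_zero_iff, or_iff_left hh.ne', sq_eq_zero_iff,
    sub_eq_zero] at hterm
  exact hterm

theorem eq_of_rightCellEnergy_eq_zero (hh : h ≠ 0) (hθ₂ : θ₂ ≠ 0) {u : Fin (n + 1) → ℝ}
    (hE : rightCellEnergy n h θ₂ u = 0) : u (Fin.last n) = u ⟨n - 1, by omega⟩ := by
  simpa [rightCellEnergy, hh, hθ₂, sub_eq_zero] using hE

theorem succ_eq_castSucc_of_energies_eq_zero (hh : 0 < h) (hθ₂ : 0 < θ₂)
    {u : Fin (n + 1) → ℝ} (h01 : u 1 = u 0) (hint : interiorEnergy n h u = 0)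
    (hright : rightCellEnergy n h θ₂ u = 0) (i : Fin n) : u i.succ = u i.castSucc := by
  rcases Nat.eq_zero_or_pos (i : ℕ) with hi | hi
  · have h1 : i.succ = 1 := by
      ext; rw [Fin.val_succ, Fin.val_one', Nat.mod_eq_of_lt (by omega)]; omega
    have h0 : i.castSucc = 0 := by ext; simp [hi]
    rwa [h1, h0]
  by_cases hlast : (i : ℕ) = n - 1
  · have h1 : i.succ = Fin.last n := by ext; simp; omega
    have h0 : i.castSucc = ⟨n - 1, by omega⟩ := by ext; simp [hlast]
    rw [h1, h0]
    exact eq_of_rightCellEnergy_eq_zero hh.ne' hθ₂.ne' hright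
  · exact eq_of_interiorEnergy_eq_zero hh hint i hi (by omega)

theorem ghostForm_pos (hθ₁ : 0 < θ₁) (hh : 0 < h) (hθ₂ : 0 < θ₂) (hlam : 1 / (θ₁ * h) < lam)
    {u : Fin (n + 1) → ℝ} (hu : u ≠ 0) : 0 < ghostForm n h θ₁ θ₂ lam u := by
  rw [ghostForm_eq hθ₁.ne' hh.ne']
  have hθh : 0 < θ₁ * h := mul_pos hθ₁ hh
  have hint := interiorEnergy_nonneg hh.le u
  have hright := rightCellEnergy_nonneg hh.le hθ₂.le u
  have hv := mul_nonneg (sub_pos.mpr hlam).le (sq_nonneg (boundaryValue θ₁ u))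
  have h1 := div_nonneg (sq_nonneg (u 1)) hθh.le
  by_contra! hle
  have hu1 : u 1 = 0 := by
    have : u 1 ^ 2 / (θ₁ * h) = 0 := by linarith
    simpa [hθh.ne'] using this
  have hu0 : u 0 = 0 := by
    have : (lam - 1 / (θ₁ * h)) * boundaryValue θ₁ u ^ 2 = 0 := by linarith
    simpa [boundaryValue, hu1, hθ₁.ne'] using
      (mul_eq_zero.mp this).resolve_left (sub_pos.mpr hlam).ne'
  refine hu (Fin.eq_zero_of_succ_eq_castSucc hu0
    (succ_eq_castSucc_of_energies_eq_zero hh hθ₂ (by rw [hu0, hu1]) ?_ ?_)) <;> linarith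

end GhostFEM

end

/-- Exact positive-definiteness threshold for the 1D ghost-FEM stiffness matrix:
the quadratic form `Q(u) = ∫(v')² - 2v(a)(n·∇v)(a) + λv(a)²` is positive on all
nonzero `u ∈ ℝ^{n+1}` if and only if `λθ₁h > 1`. -/
theorem ghost_fem_posdef_iff (n : ℕ) (hn : 2 ≤ n) (h θ₁ θ₂ lam : ℝ)
    (hh : 0 < h) (hθ₁ : θ₁ ∈ Set.Ioc (0 : ℝ) 1) (hθ₂ : θ₂ ∈ Set.Ioc (0 : ℝ) 1) :
    (∀ u : Fin (n + 1) → ℝ, u ≠ 0 →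
        0 < θ₁ * (u 1 - u 0) ^ 2 / h
            + (∑ i ∈ Finset.univ.filter (fun i : Fin (n + 1) =>
                  1 ≤ (i : ℕ) ∧ (i : ℕ) ≤ n - 2), (u (i + 1) - u i) ^ 2 / h)
            + θ₂ * (u (Fin.last n) - u ⟨n - 1, by omega⟩) ^ 2 / h
            + 2 * (θ₁ * u 0 + (1 - θ₁) * u 1) * (u 1 - u 0) / h
            + lam * (θ₁ * u 0 + (1 - θ₁) * u 1) ^ 2)
      ↔ 1 < lam * θ₁ * h := by
  obtain ⟨hθ₁, -⟩ := hθ₁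
  obtain ⟨hθ₂, -⟩ := hθ₂
  change (∀ u, u ≠ 0 → 0 < GhostFEM.ghostForm n h θ₁ θ₂ lam u) ↔ _
  rw [mul_assoc, ← div_lt_iff₀ (mul_pos hθ₁ hh)]
  refine ⟨fun hpos => ?_, fun hlam _ hu => GhostFEM.ghostForm_pos hθ₁ hh hθ₂ hlam hu⟩
  have hsingle := hpos (Pi.single 0 1) (by simp)
  rw [GhostFEM.ghostForm_single_zero hn hθ₁.ne' hh.ne'] at hsingle
  exact sub_pos.mp (pos_of_mul_pos_left hsingle (sq_nonneg θ₁))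
end
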